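/- For the two-component univariate Gaussian mixture density f_{α,μ,σ}, the parameters are non-identifiable exactly in the trivial cases: f_{α,μ,σ} equals a single Gaussian density N(m, s²) for some m, s if and only if α = 0, or α = 1, or (μ₁,σ₁) = (μ₂,σ₂). -/

import Mathlib

open Real

noncomputable def mixf (α μ₁ μ₂ σ₁ σ₂ x : ℝ) : ℝ :=
  α / (Real.sqrt (2 * Real.pi) * σ₁) * Real.exp (-(x - μ₁) ^ 2 / (2 * σ₁ ^ 2)) +
    (1 - α) / (Real.sqrt (2 * Real.pi) * σ₂) * Real.exp (-(x - μ₂) ^ 2 / (2 * σ₂ ^ 2))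

/-!
Divide a relation `A g₁ + B g₂ = C g` between Gaussian densities (with `A, B > 0`) by
`g`: each quotient `gᵢ / g` is a positive multiple of `exp pᵢ` for a quadratic `pᵢ`, and both
terms are bounded by `C`, so each `pᵢ` is bounded above, hence either constant or tending to `-∞`.
If `p₁` tended to `-∞`, the second term would tend to `C`, which is impossible since it is
either constant (then equal to `C - A exp p₁ < C`) or also tending to `0`. So `p₁` is constant,
which forces `g₁ = g`; by symmetry `g₂ = g` as well.
-/

open Filter Topology

section Quadratic

variable {a b c : ℝ}

lemma quadratic_eq_complete_square (ha : a ≠ 0) (x : ℝ) :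
    a * x ^ 2 + b * x + c = a * (x + b / (2 * a)) ^ 2 + (c - b ^ 2 / (4 * a)) := by
  field_simp
  ring

lemma tendsto_quadratic_atBot (ha : a < 0) :
    Tendsto (fun x : ℝ => a * x ^ 2 + b * x + c) atTop atBot := by
  simp only [quadratic_eq_complete_square ha.ne]
  exact tendsto_atBot_add_const_right _ _ <| Tendsto.const_mul_atTop_of_neg ha <|
    (tendsto_pow_atTop two_ne_zero).comp (tendsto_atTop_add_const_right _ _ tendsto_id)

lemma tendsto_quadratic_atTop (ha : 0 < a) :
    Tendsto (fun x : ℝ => a * x ^ 2 + b * x + c) atTop atTop := by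
  simp only [quadratic_eq_complete_square ha.ne']
  exact tendsto_atTop_add_const_right _ _ <| Tendsto.const_mul_atTop ha <|
    (tendsto_pow_atTop two_ne_zero).comp (tendsto_atTop_add_const_right _ _ tendsto_id)

lemma neg_or_eq_zero_of_quadratic_le {M : ℝ} (h : ∀ x : ℝ, a * x ^ 2 + b * x + c ≤ M) :
    a < 0 ∨ (a = 0 ∧ b = 0) := by
  rcases lt_trichotomy a 0 with ha | rfl | ha
  · exact Or.inl ha
  · refine Or.inr ⟨rfl, ?_⟩
    by_contra hb
    have hx := h ((M - c + 1) / b)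
    rw [mul_div_cancel₀ _ hb] at hx
    linarith
  · obtain ⟨x, hx⟩ := ((tendsto_quadratic_atTop (b := b) (c := c) ha).eventually_gt_atTop M).exists
    exact absurd (h x) hx.not_ge

lemma tendsto_exp_quadratic_zero (ha : a < 0) :
    Tendsto (fun x : ℝ => exp (a * x ^ 2 + b * x + c)) atTop (𝓝 0) :=
  tendsto_exp_atBot.comp (tendsto_quadratic_atBot ha)

end Quadratic

lemma quadratic_le_log_of_mul_exp_le {a b c A C : ℝ} (hA : 0 < A)
    (h : ∀ x : ℝ, A * exp (a * x ^ 2 + b * x + c) ≤ C) (x : ℝ) :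
    a * x ^ 2 + b * x + c ≤ log (C / A) := by
  have hC : 0 < C / A := div_pos ((by positivity : 0 < A * exp _).trans_le (h 0)) hA
  rw [← exp_le_exp, exp_log hC, le_div_iff₀ hA, mul_comm]
  exact h x

lemma eq_zero_of_add_exp_quadratic_eq_const {A B C a₁ b₁ c₁ a₂ b₂ c₂ : ℝ} (hA : 0 < A)
    (hB : 0 < B) (h : ∀ x : ℝ, A * exp (a₁ * x ^ 2 + b₁ * x + c₁)
        + B * exp (a₂ * x ^ 2 + b₂ * x + c₂) = C) :
    a₁ = 0 ∧ b₁ = 0 := by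
  set f₁ := fun x : ℝ => A * exp (a₁ * x ^ 2 + b₁ * x + c₁)
  set f₂ := fun x : ℝ => B * exp (a₂ * x ^ 2 + b₂ * x + c₂)
  have hf₁ : ∀ x, 0 < f₁ x := fun x => by positivity
  have hf₂ : ∀ x, 0 < f₂ x := fun x => by positivity
  have hf₁_le : ∀ x, f₁ x ≤ C := fun x => by linarith [h x, hf₂ x]
  have hf₂_lt : ∀ x, f₂ x < C := fun x => by linarith [h x, hf₁ x]
  refine (neg_or_eq_zero_of_quadratic_le (quadratic_le_log_of_mul_exp_le hA hf₁_le)).resolve_left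
    fun ha₁ => ?_
  have hf₂_to_C : Tendsto f₂ atTop (𝓝 C) := by
    have hf₁_to_0 : Tendsto f₁ atTop (𝓝 0) := by
      simpa using (tendsto_exp_quadratic_zero ha₁).const_mul A
    simpa [f₂, eq_sub_of_add_eq' (h _)] using hf₁_to_0.const_sub C
  rcases neg_or_eq_zero_of_quadratic_le
      (quadratic_le_log_of_mul_exp_le hB fun x => (hf₂_lt x).le) with ha₂ | ⟨rfl, rfl⟩
  · have hf₂_to_0 : Tendsto f₂ atTop (𝓝 0) := by
      simpa using (tendsto_exp_quadratic_zero ha₂).const_mul B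
    linarith [tendsto_nhds_unique hf₂_to_C hf₂_to_0, hf₁_le 0, hf₁ 0]
  · have hf₂_const : f₂ = fun _ => B * exp c₂ := by
      funext x
      simp [f₂]
    rw [hf₂_const, tendsto_const_nhds_iff] at hf₂_to_C
    linarith [hf₂_lt 0, congrFun hf₂_const 0]

noncomputable def gaussDensity (m s x : ℝ) : ℝ :=
  1 / (sqrt (2 * π) * s) * exp (-(x - m) ^ 2 / (2 * s ^ 2))

lemma gaussDensity_pos {s : ℝ} (hs : 0 < s) (m x : ℝ) : 0 < gaussDensity m s x := by
  unfold gaussDensity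
  positivity

lemma mixf_eq_add_gaussDensity (α μ₁ μ₂ σ₁ σ₂ x : ℝ) :
    mixf α μ₁ μ₂ σ₁ σ₂ x = α * gaussDensity μ₁ σ₁ x + (1 - α) * gaussDensity μ₂ σ₂ x := by
  simp only [mixf, gaussDensity]
  ring

lemma gaussDensity_div_gaussDensity {μ σ m s : ℝ} (hσ : 0 < σ) (hs : 0 < s) (x : ℝ) :
    gaussDensity μ σ x / gaussDensity m s x =
      s / σ * exp ((1 / (2 * s ^ 2) - 1 / (2 * σ ^ 2)) * x ^ 2 + (μ / σ ^ 2 - m / s ^ 2) * x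
        + (m ^ 2 / (2 * s ^ 2) - μ ^ 2 / (2 * σ ^ 2))) := by
  have hexp : (1 / (2 * s ^ 2) - 1 / (2 * σ ^ 2)) * x ^ 2 + (μ / σ ^ 2 - m / s ^ 2) * x
      + (m ^ 2 / (2 * s ^ 2) - μ ^ 2 / (2 * σ ^ 2))
      = -(x - μ) ^ 2 / (2 * σ ^ 2) - -(x - m) ^ 2 / (2 * s ^ 2) := by
    field_simp
    ring
  rw [hexp, exp_sub, gaussDensity, gaussDensity]
  field_simp

lemma eq_of_gaussian_coeffs_eq_zero {μ σ m s : ℝ} (hσ : 0 < σ) (hs : 0 < s)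
    (ha : 1 / (2 * s ^ 2) - 1 / (2 * σ ^ 2) = 0) (hb : μ / σ ^ 2 - m / s ^ 2 = 0) :
    μ = m ∧ σ = s := by
  have hσs : σ = s := by
    have hsq : σ ^ 2 = s ^ 2 := by
      field_simp at ha
      linarith
    nlinarith
  subst hσs
  refine ⟨?_, rfl⟩
  rw [div_sub_div_same, div_eq_zero_iff] at hb
  exact sub_eq_zero.mp (hb.resolve_right (by positivity))

lemma eq_of_add_gaussDensity_eq {A B C μ₁ σ₁ μ₂ σ₂ m s : ℝ} (hA : 0 < A) (hB : 0 < B)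
    (hσ₁ : 0 < σ₁) (hσ₂ : 0 < σ₂) (hs : 0 < s)
    (h : ∀ x, A * gaussDensity μ₁ σ₁ x + B * gaussDensity μ₂ σ₂ x = C * gaussDensity m s x) :
    μ₁ = m ∧ σ₁ = s := by
  have hquot : ∀ x, A * (gaussDensity μ₁ σ₁ x / gaussDensity m s x)
      + B * (gaussDensity μ₂ σ₂ x / gaussDensity m s x) = C := fun x => by
    rw [mul_div_assoc', mul_div_assoc', ← add_div, h x,
      mul_div_cancel_right₀ _ (gaussDensity_pos hs m x).ne']
  simp only [gaussDensity_div_gaussDensity hσ₁ hs, gaussDensity_div_gaussDensity hσ₂ hs,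
    ← mul_assoc] at hquot
  obtain ⟨ha, hb⟩ := eq_zero_of_add_exp_quadratic_eq_const (by positivity) (by positivity) hquot
  exact eq_of_gaussian_coeffs_eq_zero hσ₁ hs ha hb

/-- The two-component Gaussian mixture density reduces to a single Gaussian density
exactly in the trivial cases α = 0, α = 1, or (μ₁,σ₁) = (μ₂,σ₂). -/
theorem mixture_is_gaussian_iff_trivial (α μ₁ μ₂ σ₁ σ₂ : ℝ)
    (hα : 0 ≤ α ∧ α ≤ 1) (hσ₁ : 0 < σ₁) (hσ₂ : 0 < σ₂) :
    (∃ m s : ℝ, 0 < s ∧ ∀ x : ℝ, mixf α μ₁ μ₂ σ₁ σ₂ x =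
        1 / (Real.sqrt (2 * Real.pi) * s) * Real.exp (-(x - m) ^ 2 / (2 * s ^ 2))) ↔
      (α = 0 ∨ α = 1 ∨ (μ₁ = μ₂ ∧ σ₁ = σ₂)) := by
  simp only [← gaussDensity.eq_1, mixf_eq_add_gaussDensity]
  constructor
  · rintro ⟨m, s, hs, h⟩
    rcases hα.1.eq_or_lt with rfl | hα₀
    · exact Or.inl rfl
    rcases hα.2.eq_or_lt with rfl | hα₁
    · exact Or.inr (Or.inl rfl)
    have h' : ∀ x, α * gaussDensity μ₁ σ₁ x + (1 - α) * gaussDensity μ₂ σ₂ x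
        = 1 * gaussDensity m s x := by simpa using h
    obtain ⟨rfl, rfl⟩ := eq_of_add_gaussDensity_eq hα₀ (sub_pos.mpr hα₁) hσ₁ hσ₂ hs h'
    obtain ⟨rfl, rfl⟩ := eq_of_add_gaussDensity_eq (sub_pos.mpr hα₁) hα₀ hσ₂ hσ₁ hs
      fun x => by rw [add_comm, h']
    exact Or.inr (Or.inr ⟨rfl, rfl⟩)
  · rintro (rfl | rfl | ⟨rfl, rfl⟩)
    · exact ⟨μ₂, σ₂, hσ₂, fun x => by ring⟩
    · exact ⟨μ₁, σ₁, hσ₁, fun x => by ring⟩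
    · exact ⟨μ₁, σ₁, hσ₁, fun x => by ring⟩
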